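/- arXiv:1810.05813 — 4 statements merged into one kernel-verified Lean document; each statement's English description precedes it below -/
import Mathlib

section
/- Let (R, m, k) be a non-Artinian local ring with elements x_s, x_t as follows: m² = x_t·m + (x_s²), x_t² = 0, x_s·x_t = 0. Then ann(x_s) ∩ m² ⊆ x_t·m. -/
/-!
Write `a = xt * b + z` with `b ∈ m` and `z ∈ (xs²)`; since `xs * xt = 0`, `a * xs = 0` means
`z * xs = 0`. If `z = u * xs^(k+2)`, then `u` kills the nonzero element `xs^(k+3)`
(`xs` is not nilpotent, for otherwise `m` is nil and `R` Artinian), so `u ∈ m`, and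
`u * xs² ∈ m² * xs ⊆ (xs³)` puts `z` in `(xs^(k+3))`. Hence `z` lies in every power of `m`
and vanishes by Krull's intersection theorem.
-/

open IsLocalRing

section

variable {R : Type*} [CommRing R] {xs xt : R}

lemma Ideal.mul_eq_zero_of_mem_span_singleton_mul {I : Ideal R} (hst : xs * xt = 0) {b : R}
    (hb : b ∈ Ideal.span {xt} * I) : b * xs = 0 := by
  obtain ⟨s, rfl⟩ := Ideal.mem_span_singleton'.mp (Ideal.mul_le_left hb)
  rw [mul_assoc, mul_comm xt, hst, mul_zero]

namespace IsLocalRing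

variable [IsLocalRing R]

lemma isArtinianRing_of_sq_le_span [IsNoetherianRing R]
    (hm2 : maximalIdeal R ^ 2 ≤ Ideal.span {xt} * maximalIdeal R ⊔ Ideal.span {xs ^ 2})
    (hxt : IsNilpotent xt) (hxs : IsNilpotent xs) : IsArtinianRing R := by
  rw [isArtinianRing_iff_isNilpotent_maximalIdeal,
    Ideal.FG.isNilpotent_iff_le_nilradical (IsNoetherian.noetherian _)]
  have hspan : Ideal.span {xt} * maximalIdeal R ⊔ Ideal.span {xs ^ 2} ≤ nilradical R :=
    sup_le (Ideal.mul_le_left.trans ((Ideal.span_singleton_le_iff_mem _).mpr hxt))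
      ((Ideal.span_singleton_le_iff_mem _).mpr (hxs.pow_succ 1))
  intro x hx
  exact IsNilpotent.of_pow (hspan (hm2 (Ideal.pow_mem_pow hx 2)))

lemma mul_mem_span_pow_three_of_mem_sq
    (hm2 : maximalIdeal R ^ 2 ≤ Ideal.span {xt} * maximalIdeal R ⊔ Ideal.span {xs ^ 2})
    (hst : xs * xt = 0) {y : R} (hy : y ∈ maximalIdeal R ^ 2) :
    y * xs ∈ Ideal.span {xs ^ 3} := by
  obtain ⟨b, hb, c, hc, rfl⟩ := Submodule.mem_sup.mp (hm2 hy)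
  obtain ⟨v, rfl⟩ := Ideal.mem_span_singleton'.mp hc
  rw [add_mul, Ideal.mul_eq_zero_of_mem_span_singleton_mul hst hb, zero_add,
    Ideal.mem_span_singleton]
  exact ⟨v, by ring⟩

lemma mem_span_pow_succ_of_mul_eq_zero
    (hm2 : maximalIdeal R ^ 2 ≤ Ideal.span {xt} * maximalIdeal R ⊔ Ideal.span {xs ^ 2})
    (hst : xs * xt = 0) (hxs : xs ∈ maximalIdeal R) {k : ℕ} (hpow : xs ^ (k + 3) ≠ 0)
    {z : R} (hz : z ∈ Ideal.span {xs ^ (k + 2)}) (hzxs : z * xs = 0) :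
    z ∈ Ideal.span {xs ^ (k + 3)} := by
  obtain ⟨u, rfl⟩ := Ideal.mem_span_singleton'.mp hz
  have hu : u ∈ maximalIdeal R := by
    refine (mem_maximalIdeal u).mpr fun hunit => hpow ?_
    rw [← hunit.mul_right_eq_zero, ← hzxs]
    ring
  have hsq : u * xs ∈ maximalIdeal R ^ 2 := by
    rw [pow_two]
    exact Ideal.mul_mem_mul hu hxs
  obtain ⟨w, hw⟩ := Ideal.mem_span_singleton.mp (mul_mem_span_pow_three_of_mem_sq hm2 hst hsq)
  rw [Ideal.mem_span_singleton]
  exact ⟨w, by linear_combination xs ^ k * hw⟩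

lemma eq_zero_of_mem_span_sq_of_mul_eq_zero [IsNoetherianRing R]
    (hm2 : maximalIdeal R ^ 2 ≤ Ideal.span {xt} * maximalIdeal R ⊔ Ideal.span {xs ^ 2})
    (hst : xs * xt = 0) (hxs : xs ∈ maximalIdeal R) (hpow : ∀ n, xs ^ n ≠ 0)
    {z : R} (hz : z ∈ Ideal.span {xs ^ 2}) (hzxs : z * xs = 0) : z = 0 := by
  have hmem : ∀ k, z ∈ Ideal.span {xs ^ (k + 2)} := by
    intro k
    induction k with
    | zero => exact hz
    | succ k ih => exact mem_span_pow_succ_of_mul_eq_zero hm2 hst hxs (hpow _) ih hzxs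
  have hmem_pow : ∀ n, z ∈ maximalIdeal R ^ n := fun n =>
    Ideal.pow_le_pow_right (Nat.le_add_right n 2)
      ((Ideal.span_singleton_le_iff_mem _).mpr (Ideal.pow_mem_pow hxs _) (hmem n))
  have hkrull :=
    Ideal.iInf_pow_eq_bot_of_isLocalRing (maximalIdeal R) (maximalIdeal.isMaximal R).ne_top
  simpa [hkrull] using Ideal.mem_iInf.mpr hmem_pow

end IsLocalRing

end

theorem stmt_5_general {R : Type*} [CommRing R] [IsLocalRing R] [IsNoetherianRing R]
    (hnotArt : ¬ IsArtinianRing R)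
    (xs xt : R)
    (hxs : xs ∈ maximalIdeal R)
    (hm2 : (maximalIdeal R) ^ 2 = Ideal.span {xt} * maximalIdeal R ⊔ Ideal.span {xs ^ 2})
    (hxt2 : xt ^ 2 = 0) (hst : xs * xt = 0) :
    ∀ a ∈ (maximalIdeal R) ^ 2, a * xs = 0 → a ∈ Ideal.span {xt} * maximalIdeal R := by
  have hpow : ∀ n, xs ^ n ≠ 0 := fun n hn =>
    hnotArt (isArtinianRing_of_sq_le_span hm2.le ⟨2, hxt2⟩ ⟨n, hn⟩)
  intro a ha haxs
  obtain ⟨b, hb, c, hc, rfl⟩ := Submodule.mem_sup.mp (hm2 ▸ ha)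
  have hcxs : c * xs = 0 := by
    rwa [add_mul, Ideal.mul_eq_zero_of_mem_span_singleton_mul hst hb, zero_add] at haxs
  rwa [eq_zero_of_mem_span_sq_of_mul_eq_zero hm2.le hst hxs hpow hc hcxs, add_zero]

/-- Let `(R,m,k)` be a non-Artinian local ring with elements `xs, xt`
satisfying `m² = xt·m + (xs²)`, `xt² = 0` and `xs·xt = 0`.  Then
`ann(xs) ∩ m² ⊆ xt·m`. -/
theorem stmt_5 {R : Type*} [CommRing R] [IsLocalRing R] [IsNoetherianRing R]
    (hnotArt : ¬ IsArtinianRing R)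
    (xs xt : R)
    (hxs : xs ∈ maximalIdeal R) (hxt : xt ∈ maximalIdeal R)
    (hm2 : (maximalIdeal R) ^ 2 = Ideal.span {xt} * maximalIdeal R ⊔ Ideal.span {xs ^ 2})
    (hxt2 : xt ^ 2 = 0) (hst : xs * xt = 0) :
    ∀ a ∈ (maximalIdeal R) ^ 2, a * xs = 0 → a ∈ Ideal.span {xt} * maximalIdeal R :=
  stmt_5_general hnotArt xs xt hxs hm2 hxt2 hst
end

section
/- Let k be a field of characteristic 2 and β, α ∈ k with β ≠ 0. Let R = k[x,y,z]/(xy, x² - yz, y² - αyz - βxz). Then m^i = (z^i) for all i ≥ 3, and dim_k R_i = 1 for all i ≥ 3. -/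
/-!
In `R`, the relations force every cubic monomial other than `z³` to vanish: `y²z = y·x² = 0`,
`x³ = x·yz = 0`, and since `β` is a unit, `β x²z = x(y² - αyz) = 0`, `yz² = x²z = 0`,
`β xz² = z(y² - αyz) = 0`, `y³ = y(αyz + βxz) = 0`. Hence every monomial of degree `i ≥ 3`
maps to `0` or to `zⁱ`, and both `mⁱ` and `Rᵢ` are spanned by `zⁱ`, which is nonzero
(evaluate at `(0, 0, 1)`).
-/

open MvPolynomial

/-- The defining ideal `(xy, x² - yz, y² - αyz - βxz)` of the ring in Statement 7. -/
noncomputable def stmt7Ideal {k : Type*} [Field k] (α β : k) : Ideal (MvPolynomial (Fin 3) k) :=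
  Ideal.span {X 0 * X 1, X 0 ^ 2 - X 1 * X 2,
    X 1 ^ 2 - C α * (X 1 * X 2) - C β * (X 0 * X 2)}

/-- The degree-`i` homogeneous component of `R = k[x,y,z]/(xy, x²-yz, y²-αyz-βxz)`. -/
noncomputable def stmt7Piece {k : Type*} [Field k] (α β : k) (i : ℕ) :
    Submodule k (MvPolynomial (Fin 3) k ⧸ stmt7Ideal α β) :=
  (MvPolynomial.homogeneousSubmodule (Fin 3) k i).map
    (Ideal.Quotient.mkₐ k (stmt7Ideal α β)).toLinearMap

theorem Submodule.span_eq_span_singleton_of_subset_insert_zero {R M : Type*} [Semiring R]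
    [AddCommMonoid M] [Module R M] {s : Set M} {a : M} (ha : a ∈ s) (hs : s ⊆ {0, a}) :
    span R s = span R {a} :=
  le_antisymm ((span_mono hs).trans_eq span_insert_zero)
    (span_mono (Set.singleton_subset_iff.2 ha))

theorem pow_mul_pow_eq_zero_of_cubics {M : Type*} [CommMonoidWithZero M] {u z : M}
    (h30 : u ^ 3 = 0) (h21 : u ^ 2 * z = 0) (h12 : u * z ^ 2 = 0) {a c : ℕ} (ha : 0 < a)
    (hac : 3 ≤ a + c) : u ^ a * z ^ c = 0 := by
  rcases (by omega : 3 ≤ a ∨ (a = 2 ∧ 1 ≤ c) ∨ (a = 1 ∧ 2 ≤ c)) with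
    h | ⟨rfl, h⟩ | ⟨rfl, h⟩
  · obtain ⟨a, rfl⟩ := Nat.exists_eq_add_of_le h
    rw [pow_add, h30, zero_mul, zero_mul]
  · obtain ⟨c, rfl⟩ := Nat.exists_eq_add_of_le h
    rw [pow_add, ← mul_assoc, pow_one, h21, zero_mul]
  · obtain ⟨c, rfl⟩ := Nat.exists_eq_add_of_le h
    rw [pow_add, ← mul_assoc, pow_one, h12, zero_mul]

section Relations

variable {A : Type*} [CommRing A] {x y z α β : A}

theorem cubics_eq_zero_left (hβ : IsUnit β) (hxy : x * y = 0) (hx2 : x ^ 2 = y * z)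
    (hy2 : y ^ 2 = α * (y * z) + β * (x * z)) :
    x ^ 3 = 0 ∧ x ^ 2 * z = 0 ∧ x * z ^ 2 = 0 := by
  have hy2z : y ^ 2 * z = 0 := by linear_combination x * hxy - y * hx2
  have hx2z : x ^ 2 * z = 0 :=
    hβ.mul_right_eq_zero.1 (by linear_combination (y - α * z) * hxy - x * hy2)
  refine ⟨by linear_combination x * hx2 + z * hxy, hx2z, hβ.mul_right_eq_zero.1 ?_⟩
  linear_combination hy2z - z * hy2 - α * hx2z + α * z * hx2

theorem cubics_eq_zero_right (hβ : IsUnit β) (hxy : x * y = 0) (hx2 : x ^ 2 = y * z)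
    (hy2 : y ^ 2 = α * (y * z) + β * (x * z)) :
    y ^ 3 = 0 ∧ y ^ 2 * z = 0 ∧ y * z ^ 2 = 0 := by
  have hy2z : y ^ 2 * z = 0 := by linear_combination x * hxy - y * hx2
  have hx2z := (cubics_eq_zero_left hβ hxy hx2 hy2).2.1
  refine ⟨by linear_combination y * hy2 + α * hy2z + β * z * hxy, hy2z, ?_⟩
  linear_combination hx2z - z * hx2

theorem pow_mul_pow_mul_pow_eq_zero_or (hβ : IsUnit β) (hxy : x * y = 0)
    (hx2 : x ^ 2 = y * z) (hy2 : y ^ 2 = α * (y * z) + β * (x * z)) {a b c : ℕ}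
    (habc : 3 ≤ a + b + c) : x ^ a * y ^ b * z ^ c = 0 ∨ a = 0 ∧ b = 0 := by
  obtain ⟨hx3, hx2z, hxz2⟩ := cubics_eq_zero_left hβ hxy hx2 hy2
  obtain ⟨hy3, hy2z, hyz2⟩ := cubics_eq_zero_right hβ hxy hx2 hy2
  rcases Nat.eq_zero_or_pos a with rfl | ha <;> rcases Nat.eq_zero_or_pos b with rfl | hb
  · exact .inr ⟨rfl, rfl⟩
  · left
    rw [pow_zero, one_mul, pow_mul_pow_eq_zero_of_cubics hy3 hy2z hyz2 hb (by omega)]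
  · left
    rw [pow_zero, mul_one, pow_mul_pow_eq_zero_of_cubics hx3 hx2z hxz2 ha (by omega)]
  · left
    obtain ⟨a, rfl⟩ := Nat.exists_eq_add_of_lt ha
    obtain ⟨b, rfl⟩ := Nat.exists_eq_add_of_lt hb
    linear_combination x ^ a * y ^ b * z ^ c * hxy

end Relations

section Quotient

variable {k : Type*} [Field k] (α β : k)

local notation "Q" => Ideal.Quotient.mk (stmt7Ideal α β)

theorem stmt7_relations :
    Q (X 0) * Q (X 1) = 0 ∧ Q (X 0) ^ 2 = Q (X 1) * Q (X 2) ∧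
      Q (X 1) ^ 2 = Q (C α) * (Q (X 1) * Q (X 2)) + Q (C β) * (Q (X 0) * Q (X 2)) := by
  simp only [← map_mul, ← map_pow, ← map_add, ← sub_eq_zero (b := Q _), ← map_sub,
    Ideal.Quotient.eq_zero_iff_mem]
  refine ⟨?_, ?_, ?_⟩ <;> refine Ideal.subset_span ?_
  · exact .inl rfl
  · exact .inr (.inl rfl)
  · exact .inr (.inr (by rw [Set.mem_singleton_iff]; ring))

theorem stmt7_mk_monomials_subset (hβ : β ≠ 0) {i : ℕ} (hi : 3 ≤ i) :
    Q '' ((monomial · 1) '' {d | d.degree = i}) ⊆ {0, Q (X 2) ^ i} := by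
  rintro _ ⟨_, ⟨d, hd, rfl⟩, rfl⟩
  obtain ⟨hxy, hx2, hy2⟩ := stmt7_relations α β
  have hunit : IsUnit (Q (C β)) := (isUnit_iff_ne_zero.2 hβ).map ((Ideal.Quotient.mk _).comp C)
  replace hd : d 0 + d 1 + d 2 = i := by simpa [Finsupp.degree_eq_sum, Fin.sum_univ_three] using hd
  dsimp only
  rw [monomial_eq, Finsupp.prod_fintype _ _ fun _ ↦ pow_zero _, Fin.prod_univ_three, C_1,
    one_mul, map_mul, map_mul, map_pow, map_pow, map_pow]
  rcases pow_mul_pow_mul_pow_eq_zero_or hunit hxy hx2 hy2 (a := d 0) (b := d 1) (c := d 2)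
    (by omega) with h | ⟨h0, h1⟩
  · exact .inl h
  · right
    simp [← hd, h0, h1]

theorem stmt7_mk_X_two_pow_ne_zero (i : ℕ) : Q (X 2) ^ i ≠ 0 := by
  let φ : MvPolynomial (Fin 3) k →ₐ[k] k := aeval ![0, 0, 1]
  have hker : stmt7Ideal α β ≤ RingHom.ker φ := by
    rw [stmt7Ideal, Ideal.span_le]
    rintro p (rfl | rfl | rfl) <;> simp [φ]
  intro h
  rw [← map_pow, Ideal.Quotient.eq_zero_iff_mem] at h
  simpa [φ] using hker h

theorem stmt7_span_vars_pow_eq_span_monomials (i : ℕ) :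
    Ideal.span {Q (X 0), Q (X 1), Q (X 2)} ^ i =
      Ideal.span (Q '' ((monomial · 1) '' {d : Fin 3 →₀ ℕ | d.degree = i})) := by
  have hvars : Ideal.span {Q (X 0), Q (X 1), Q (X 2)} = (idealOfVars (Fin 3) k).map Q := by
    rw [Ideal.map_span, ← Set.range_comp]
    congr
    ext
    simp [Fin.exists_fin_succ, eq_comm]
  rw [hvars, ← Ideal.map_pow, pow_idealOfVars_eq_span, Ideal.map_span]
  rfl

theorem stmt7Piece_eq_span_monomials (i : ℕ) :
    stmt7Piece α β i = Submodule.span k (Q '' ((monomial · 1) '' {d | d.degree = i})) := by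
  rw [stmt7Piece, homogeneousSubmodule_eq_finsupp_supported,
    AddMonoidAlgebra.supported_eq_span_single, Submodule.map_span]
  rfl

theorem stmt7_mk_X_two_pow_mem (i : ℕ) :
    Q (X 2) ^ i ∈ Q '' ((monomial · 1) '' {d | d.degree = i}) :=
  ⟨_, ⟨Finsupp.single 2 i, Finsupp.degree_single _ _, rfl⟩, by
    rw [← map_pow, X_pow_eq_monomial]⟩

end Quotient

theorem stmt_7_general {k : Type*} [Field k] (α β : k) (hβ : β ≠ 0) :
    ∀ i : ℕ, 3 ≤ i →
      (Ideal.span {Ideal.Quotient.mk (stmt7Ideal α β) (X 0),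
          Ideal.Quotient.mk (stmt7Ideal α β) (X 1),
          Ideal.Quotient.mk (stmt7Ideal α β) (X 2)}) ^ i =
        Ideal.span {(Ideal.Quotient.mk (stmt7Ideal α β) (X 2)) ^ i} ∧
      Module.finrank k (stmt7Piece α β i) = 1 := by
  intro i hi
  have hz := stmt7_mk_X_two_pow_mem α β i
  have hsub := stmt7_mk_monomials_subset α β hβ hi
  refine ⟨?_, ?_⟩
  · rw [stmt7_span_vars_pow_eq_span_monomials]
    exact Submodule.span_eq_span_singleton_of_subset_insert_zero hz hsub
  · rw [stmt7Piece_eq_span_monomials,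
      Submodule.span_eq_span_singleton_of_subset_insert_zero hz hsub,
      finrank_span_singleton (stmt7_mk_X_two_pow_ne_zero α β i)]

/-- Let `k` be a field of characteristic `2`, `β ≠ 0`, and
`R = k[x,y,z]/(xy, x² - yz, y² - αyz - βxz)`.  Then `m^i = (z^i)` for all `i ≥ 3`,
and `dim_k R_i = 1` for all `i ≥ 3`. -/
theorem stmt_7 {k : Type*} [Field k] [CharP k 2] (α β : k) (hβ : β ≠ 0) :
    ∀ i : ℕ, 3 ≤ i →
      (Ideal.span {Ideal.Quotient.mk (stmt7Ideal α β) (X 0),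
          Ideal.Quotient.mk (stmt7Ideal α β) (X 1),
          Ideal.Quotient.mk (stmt7Ideal α β) (X 2)}) ^ i =
        Ideal.span {(Ideal.Quotient.mk (stmt7Ideal α β) (X 2)) ^ i} ∧
      Module.finrank k (stmt7Piece α β i) = 1 :=
  stmt_7_general α β hβ
end

section
/- Let (R, m, k) be a local ring and A = gr_m(R) its associated graded ring. Suppose there exists u ∈ A_1 with A_i = u·A_{i-1} for all i ≥ 3, and dim_k A_i = dim_k A_{i+1} ≠ 0 for all i ≥ 3. Then every degree-1 socle element of A is the initial form of a socle element of R. In particular, if socle(R) ⊆ m², then A has no non-zero socle elements in degree 1. -/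
open IsLocalRing

/-- The degree-`i` component `m^i / m^(i+1)` of the associated graded ring of a local
`k`-algebra `R` with maximal ideal `m`, viewed as a `k`-vector space. -/
abbrev grPiece (k : Type*) {R : Type*} [Field k] [CommRing R] [Algebra k R]
    (m : Ideal R) (i : ℕ) :=
  ↥((m ^ i).restrictScalars k) ⧸
    (Submodule.comap ((m ^ i).restrictScalars k).subtype ((m ^ (i + 1)).restrictScalars k))

section Aux

variable {k R : Type*} [Field k] [CommRing R] [Algebra k R]

/-- multiplication by `u` as a map between graded pieces -/
noncomputable def mulU (m : Ideal R) (u : R) (hu : u ∈ m) (n : ℕ) :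
    (↥((m ^ n).restrictScalars k) ⧸
      (Submodule.comap ((m ^ n).restrictScalars k).subtype ((m ^ (n + 1)).restrictScalars k))) →ₗ[k]
    (↥((m ^ (n+1)).restrictScalars k) ⧸
      (Submodule.comap ((m ^ (n+1)).restrictScalars k).subtype ((m ^ (n + 2)).restrictScalars k))) :=
  Submodule.mapQ _ _
    { toFun := fun x => ⟨u * x.1, by
        have := Ideal.mul_mem_mul hu x.2
        rwa [← pow_succ'] at this⟩
      map_add' := fun x y => by ext; simp [mul_add]
      map_smul' := fun c x => by ext; simp [Submodule.coe_smul, mul_smul_comm] }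
    (by
      intro x hx
      simp only [Submodule.mem_comap, Submodule.restrictScalars_mem] at hx ⊢
      have := Ideal.mul_mem_mul hu hx
      rwa [← pow_succ'] at this)

end Aux

/-- Let `(R,m,k)` be a local ring with associated graded ring
`A = gr_m R`.  If there is `u ∈ A_1` with `A_i = u·A_{i-1}` for all `i ≥ 3`, and
`dim_k A_i = dim_k A_{i+1} ≠ 0` for all `i ≥ 3`, then every degree-one socle element of
`A` is the initial form of a socle element of `R`; in particular, if
`socle(R) ⊆ m²` then `A` has no socle elements in degree one. -/
theorem stmt_9 {k R : Type*} [Field k] [CommRing R] [Algebra k R]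
    [IsLocalRing R] [IsNoetherianRing R]
    (hres : Function.Bijective (algebraMap k (R ⧸ maximalIdeal R)))
    (u : R) (hu : u ∈ maximalIdeal R)
    (hsur : ∀ i : ℕ, 3 ≤ i → (maximalIdeal R) ^ i =
      Ideal.span {u} * (maximalIdeal R) ^ (i - 1) ⊔ (maximalIdeal R) ^ (i + 1))
    (hdim : ∀ i : ℕ, 3 ≤ i →
      Module.finrank k (grPiece k (maximalIdeal R) i) =
          Module.finrank k (grPiece k (maximalIdeal R) (i + 1)) ∧
        Module.finrank k (grPiece k (maximalIdeal R) i) ≠ 0) :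
    (∀ y ∈ maximalIdeal R, (∀ z ∈ maximalIdeal R, y * z ∈ (maximalIdeal R) ^ 3) →
      ∃ s : R, (∀ z ∈ maximalIdeal R, s * z = 0) ∧ y - s ∈ (maximalIdeal R) ^ 2) ∧
    ((∀ s : R, (∀ z ∈ maximalIdeal R, s * z = 0) → s ∈ (maximalIdeal R) ^ 2) →
      ∀ y ∈ maximalIdeal R, (∀ z ∈ maximalIdeal R, y * z ∈ (maximalIdeal R) ^ 3) →
        y ∈ (maximalIdeal R) ^ 2) := by
  set m := maximalIdeal R with hm
  -- injectivity of multiplication by u : A_n → A_{n+1} for n ≥ 3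
  have hinj : ∀ n : ℕ, 3 ≤ n → ∀ a ∈ m ^ n, u * a ∈ m ^ (n + 2) → a ∈ m ^ (n + 1) := by
    intro n hn a ha hua
    have hfin1 : FiniteDimensional k (grPiece k m n) :=
      Module.finite_of_finrank_pos (Nat.pos_of_ne_zero (hdim n hn).2)
    have hfin2 : FiniteDimensional k (grPiece k m (n+1)) :=
      Module.finite_of_finrank_pos (Nat.pos_of_ne_zero ((hdim n hn).1 ▸ (hdim n hn).2))
    have hsurj : Function.Surjective (mulU (k := k) m u hu n) := by
      intro q
      obtain ⟨⟨x, hx⟩, rfl⟩ := Submodule.Quotient.mk_surjective _ q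
      have hx' : x ∈ Ideal.span {u} * m ^ n ⊔ m ^ (n + 2) := by
        have h := hsur (n+1) (by omega)
        simpa using h ▸ hx
      obtain ⟨p, hp, qq, hq, hpq⟩ := Submodule.mem_sup.mp hx'
      obtain ⟨b, hb, rfl⟩ := Ideal.mem_span_singleton_mul.mp hp
      refine ⟨Submodule.Quotient.mk ⟨b, hb⟩, ?_⟩
      rw [mulU, Submodule.mapQ_apply]
      rw [Submodule.Quotient.eq]
      simp only [Submodule.mem_comap, Submodule.restrictScalars_mem, LinearMap.coe_mk,
        AddHom.coe_mk]
      show u * b - x ∈ m ^ (n + 2)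
      have : u * b - x = -qq := by rw [← hpq]; ring
      rw [this]
      exact neg_mem hq
    have hinjf : Function.Injective (mulU (k := k) m u hu n) :=
      (LinearMap.injective_iff_surjective_of_finrank_eq_finrank (hdim n hn).1).mpr hsurj
    have h0 : (mulU (k := k) m u hu n) (Submodule.Quotient.mk ⟨a, ha⟩) = 0 := by
      rw [mulU, Submodule.mapQ_apply, Submodule.Quotient.mk_eq_zero]
      simpa using hua
    have h1 : Submodule.Quotient.mk (⟨a, ha⟩ : ((m ^ n).restrictScalars k)) =
        (0 : grPiece k m n) := hinjf (by rw [h0, map_zero])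
    rw [Submodule.Quotient.mk_eq_zero] at h1
    simpa using h1
  -- annihilator of u intersected with m^3 is zero
  have hann : ∀ a ∈ m ^ 3, u * a = 0 → a = 0 := by
    intro a ha hua
    have key : ∀ j : ℕ, a ∈ m ^ (j + 3) := by
      intro j
      induction j with
      | zero => simpa only [Nat.zero_add] using ha
      | succ j ih =>
        have h2 := hinj (j + 3) (by omega) a ih (by rw [hua]; exact zero_mem _)
        have h3 : j + 1 + 3 = j + 3 + 1 := by omega
        rw [h3]
        exact h2
    have : a ∈ ⨅ i : ℕ, m ^ i := by
      rw [Submodule.mem_iInf]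
      intro i
      exact Ideal.pow_le_pow_right (by omega) (key i)
    rwa [Ideal.iInf_pow_eq_bot_of_isLocalRing m
      (Ideal.IsMaximal.ne_top (IsLocalRing.maximalIdeal.isMaximal R)) , Submodule.mem_bot] at this
  -- Nakayama: m^3 = span{u} * m^2
  have hnak : (m : Ideal R) ^ 3 ≤ Ideal.span {u} * m ^ 2 := by
    have hfg : (m ^ 3 : Ideal R).FG := IsNoetherian.noetherian _
    refine Submodule.le_of_le_smul_of_le_jacobson_bot (I := m) hfg ?_ ?_
    · rw [IsLocalRing.jacobson_eq_maximalIdeal ⊥ bot_ne_top]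
    · have h3 := hsur 3 (by norm_num)
      have : m • (m ^ 3 : Ideal R) = m ^ 4 := by
        rw [smul_eq_mul, ← pow_succ']
      rw [this]
      norm_num at h3
      exact le_of_eq h3
  have main : ∀ y ∈ m, (∀ z ∈ m, y * z ∈ m ^ 3) →
      ∃ s : R, (∀ z ∈ m, s * z = 0) ∧ y - s ∈ m ^ 2 := by
    intro y hy hy3
    have hyu : y * u ∈ Ideal.span {u} * m ^ 2 := hnak (hy3 u hu)
    obtain ⟨c, hc, hcu⟩ := Ideal.mem_span_singleton_mul.mp hyu
    refine ⟨y - c, ?_, by simpa using hc⟩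
    intro z hz
    have h1 : u * (y * z - c * z) = 0 := by
      have : u * (y * z) = u * (c * z) := by
        calc u * (y * z) = (y * u) * z := by ring
        _ = (u * c) * z := by rw [hcu]
        _ = u * (c * z) := by ring
      rw [mul_sub, this, sub_self]
    have h2 : y * z - c * z ∈ m ^ 3 := by
      refine sub_mem (hy3 z hz) ?_
      have : c * z ∈ m ^ 2 * m ^ 1 := Ideal.mul_mem_mul hc (by simpa using hz)
      rwa [← pow_add] at this
    have := hann _ h2 h1
    calc (y - c) * z = y * z - c * z := by ring
    _ = 0 := this
  refine ⟨main, ?_⟩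
  intro hsoc y hy hy3
  obtain ⟨s, hs, hys⟩ := main y hy hy3
  have hs2 : s ∈ m ^ 2 := hsoc s hs
  have : y = (y - s) + s := by ring
  rw [this]
  exact add_mem hys hs2
end

section
/- Let Q be a regular local ring (or polynomial ring over k), I ⊆ q² an ideal, R = Q/I, and f₁,…,f_d ∈ I a regular sequence of elements of Q whose initial forms f₁*,…,f_d* form a regular sequence in gr(Q). Then for P = Q/(f₁,…,f_d), the associated graded ring gr(P) equals gr(Q)/(f₁*,…,f_d*); in particular (f₁,…,f_d)* = (f₁*,…,f_d*). -/
open IsLocalRing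

/-!
Write `Jₙ = ∑ⱼ fⱼ·q^(n - deg j)`; we show `(f) ∩ qⁿ ⊆ Jₙ` by induction on `n`. Given
`a = ∑ⱼ fⱼ bⱼ ∈ Jₙ ∩ q^(n+1)` with `bⱼ ∈ q^(n - deg j)`, raise the coefficients from the last
index down. When the coefficients of the `fⱼ`, `j > i`, are already in `q^(n+1-deg j)`, we get
`fᵢ bᵢ ∈ ∑_{j<i} fⱼ·q^(n - deg j) + q^(n+1)`, i.e. `fᵢ*·bᵢ* ∈ (fⱼ* : j < i)`. Regularity of `fᵢ*`
modulo `(fⱼ* : j < i)` then puts `bᵢ` in `∑_{j<i} fⱼ·q^(n - deg i - deg j) + q^(n - deg i + 1)`,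
so after multiplying by `fᵢ` the excess is absorbed by the coefficients of the earlier `fⱼ`.
-/

namespace ValabregaValla

open Finset Submodule

variable {R ι : Type*} [CommRing R] (q : Ideal R) (f : ι → R) (deg : ι → ℕ)

/-- Modulo `q^(n+1)` this is the degree-`n` part of the ideal `(fⱼ* : j ∈ s)` of `gr_q(R)`,
when `fⱼ` has initial degree `deg j`. -/
def initialSpan (s : Finset ι) (n : ℕ) : Ideal R :=
  ∑ j ∈ s, Ideal.span {f j} * q ^ (n - deg j)

/-- `fᵢ*` is a nonzerodivisor on `gr_q(R) / (fⱼ* : j ∈ t)`, read off degree by degree. -/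
def InitialFormRegular (t : Finset ι) (i : ι) : Prop :=
  ∀ m, ∀ b ∈ q ^ m, f i * b ∈ initialSpan q f deg t (m + deg i) ⊔ q ^ (m + deg i + 1) →
    b ∈ initialSpan q f deg t m ⊔ q ^ (m + 1)

variable {q f deg}

theorem initialSpan_le_pow (hf : ∀ j, f j ∈ q ^ deg j) (s : Finset ι) (n : ℕ) :
    initialSpan q f deg s n ≤ q ^ n := by
  rw [initialSpan, Ideal.sum_eq_sup, Finset.sup_le_iff]
  intro j _
  calc Ideal.span {f j} * q ^ (n - deg j)
      ≤ q ^ deg j * q ^ (n - deg j) :=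
        Ideal.mul_mono_left ((Ideal.span_singleton_le_iff_mem _).mpr (hf j))
    _ = q ^ (deg j + (n - deg j)) := (pow_add _ _ _).symm
    _ ≤ q ^ n := Ideal.pow_le_pow_right (by omega)

theorem initialSpan_insert [DecidableEq ι] {s : Finset ι} {i : ι} (his : i ∉ s) (n : ℕ) :
    initialSpan q f deg (insert i s) n =
      Ideal.span {f i} * q ^ (n - deg i) ⊔ initialSpan q f deg s n := by
  rw [initialSpan, sum_insert his, Submodule.add_eq_sup, initialSpan]

theorem span_singleton_mul_initialSpan_le {x : R} {e : ℕ} (hx : x ∈ q ^ e) (t : Finset ι)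
    (m : ℕ) : Ideal.span {x} * initialSpan q f deg t m ≤ initialSpan q f deg t (m + e) := by
  rw [initialSpan, Finset.mul_sum]
  refine Finset.sum_le_sum fun j _ => ?_
  calc Ideal.span {x} * (Ideal.span {f j} * q ^ (m - deg j))
      = Ideal.span {f j} * (Ideal.span {x} * q ^ (m - deg j)) := by ring
    _ ≤ Ideal.span {f j} * (q ^ e * q ^ (m - deg j)) :=
      Ideal.mul_mono_right (Ideal.mul_mono_left ((Ideal.span_singleton_le_iff_mem _).mpr hx))
    _ = Ideal.span {f j} * q ^ (e + (m - deg j)) := by rw [pow_add]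
    _ ≤ Ideal.span {f j} * q ^ (m + e - deg j) :=
      Ideal.mul_mono_right (Ideal.pow_le_pow_right (by omega))

theorem InitialFormRegular.mul_mem {t : Finset ι} {i : ι} (hi : InitialFormRegular q f deg t i)
    (hfi : f i ∈ q ^ deg i) {m : ℕ} {b : R} (hb : b ∈ q ^ m)
    (h : f i * b ∈ initialSpan q f deg t (m + deg i) ⊔ q ^ (m + deg i + 1)) :
    f i * b ∈ initialSpan q f deg t (m + deg i) ⊔ Ideal.span {f i} * q ^ (m + 1) := by
  have hmul := Ideal.mul_mem_mul (Ideal.mem_span_singleton_self (f i)) (hi m b hb h)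
  rw [Ideal.mul_sup] at hmul
  exact sup_le_sup_right (span_singleton_mul_initialSpan_le hfi t m) _ hmul

theorem InitialFormRegular.mem_of_mem_insert [DecidableEq ι] {t : Finset ι} {i : ι}
    (hit : i ∉ t) (hi : InitialFormRegular q f deg t i) (hfi : f i ∈ q ^ deg i) {n : ℕ}
    {T : Ideal R} (hT : T ≤ q ^ (n + 1)) {a : R} (ha : a ∈ q ^ (n + 1))
    (h : a ∈ initialSpan q f deg (insert i t) n ⊔ T) :
    a ∈ initialSpan q f deg t n ⊔ (Ideal.span {f i} * q ^ (n + 1 - deg i) ⊔ T) := by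
  rw [initialSpan_insert hit, sup_comm _ (initialSpan ..), sup_assoc] at h
  rcases lt_or_ge n (deg i) with hlt | hle
  · rwa [show n + 1 - deg i = n - deg i by omega]
  obtain ⟨v, hv, y, hy, rfl⟩ := mem_sup.mp h
  obtain ⟨u, hu, z, hz, rfl⟩ := mem_sup.mp hy
  obtain ⟨b, hb, rfl⟩ := Ideal.mem_span_singleton_mul.mp hu
  obtain ⟨m, rfl⟩ := Nat.exists_eq_add_of_le' hle
  rw [show m + deg i - deg i = m by omega] at hb
  have hfib : f i * b ∈ initialSpan q f deg t (m + deg i) ⊔ q ^ (m + deg i + 1) := by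
    rw [show f i * b = v + (f i * b + z) - v - z by ring]
    exact sub_mem (sub_mem (mem_sup_right ha) (mem_sup_left hv)) (mem_sup_right (hT hz))
  obtain ⟨c, hc, w, hw, hcw⟩ := mem_sup.mp (hi.mul_mem hfi hb hfib)
  rw [← hcw, show m + deg i + 1 - deg i = m + 1 by omega]
  exact add_mem (mem_sup_left hv) (add_mem
    (add_mem (mem_sup_left hc) (mem_sup_right (mem_sup_left hw))) (mem_sup_right (mem_sup_right hz)))

variable [Fintype ι] [LinearOrder ι]

theorem mem_initialSpan_succ_of_mem_sup (hf : ∀ j, f j ∈ q ^ deg j)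
    (hreg : ∀ i, InitialFormRegular q f deg (univ.filter (· < i)) i) (n : ℕ) (s : Finset ι)
    (hs : IsLowerSet (s : Set ι)) {a : R} (ha : a ∈ q ^ (n + 1))
    (h : a ∈ initialSpan q f deg s n ⊔ initialSpan q f deg sᶜ (n + 1)) :
    a ∈ initialSpan q f deg univ (n + 1) := by
  induction s using Finset.induction_on_max with
  | empty => simpa [initialSpan] using h
  | insert i t ht ih =>
    have hit : i ∉ t := fun hi => lt_irrefl i (ht i hi)
    have htIio : t = univ.filter (· < i) := by
      ext j
      simp only [mem_filter, mem_univ, true_and]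
      refine ⟨ht j, fun hj => ?_⟩
      have := hs hj.le (mem_insert_self i t)
      exact (mem_insert.mp this).resolve_left hj.ne
    have htl : IsLowerSet (t : Set ι) := by
      intro x y hyx hx
      rw [htIio] at hx ⊢
      simpa using lt_of_le_of_lt hyx (by simpa using hx)
    refine ih htl ?_
    have hcompl : tᶜ = insert i (insert i t)ᶜ := by
      ext j
      by_cases hji : j = i <;> simp [hji, hit]
    rw [hcompl, initialSpan_insert (by simp)]
    exact (htIio ▸ hreg i).mem_of_mem_insert hit (hf i) (initialSpan_le_pow hf _ _) ha h

theorem span_range_inf_pow_le_initialSpan (hf : ∀ j, f j ∈ q ^ deg j)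
    (hreg : ∀ i, InitialFormRegular q f deg (univ.filter (· < i)) i) (n : ℕ) :
    Ideal.span (Set.range f) ⊓ q ^ n ≤ initialSpan q f deg univ n := by
  induction n with
  | zero =>
    refine inf_le_left.trans (Ideal.span_le.mpr ?_)
    rintro _ ⟨j, rfl⟩
    rw [initialSpan, Ideal.sum_eq_sup]
    refine Finset.le_sup (f := fun j => Ideal.span {f j} * q ^ (0 - deg j)) (mem_univ j) ?_
    simp
  | succ n ih =>
    rintro a ⟨ha, han⟩
    have hmem := ih ⟨ha, Ideal.pow_le_pow_right n.le_succ han⟩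
    refine mem_initialSpan_succ_of_mem_sup hf hreg n univ (by simpa using isLowerSet_univ) han ?_
    simpa [initialSpan] using hmem

end ValabregaValla

open ValabregaValla

theorem stmt_17_general {Q : Type*} [CommRing Q] [IsLocalRing Q]
    (d : ℕ) (f : Fin d → Q)
    (deg : Fin d → ℕ)
    (hdeg : ∀ i, f i ∈ (maximalIdeal Q) ^ (deg i) ∧ f i ∉ (maximalIdeal Q) ^ (deg i + 1))
    (hinit : ∀ (i : Fin d) (n : ℕ), ∀ a ∈ (maximalIdeal Q) ^ n,
      f i * a ∈ (∑ j ∈ Finset.univ.filter (fun j => j < i),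
            Ideal.span {f j} * (maximalIdeal Q) ^ (n + deg i - deg j)) ⊔
          (maximalIdeal Q) ^ (n + deg i + 1) →
        a ∈ (∑ j ∈ Finset.univ.filter (fun j => j < i),
            Ideal.span {f j} * (maximalIdeal Q) ^ (n - deg j)) ⊔
          (maximalIdeal Q) ^ (n + 1)) :
    ∀ n : ℕ, ∀ a ∈ Ideal.span (Set.range f), a ∈ (maximalIdeal Q) ^ n →
      a ∈ (∑ j : Fin d, Ideal.span {f j} * (maximalIdeal Q) ^ (n - deg j)) ⊔
        (maximalIdeal Q) ^ (n + 1) := fun n _ ha han =>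
  Submodule.mem_sup_left <|
    span_range_inf_pow_le_initialSpan (fun i => (hdeg i).1) hinit n ⟨ha, han⟩

/-- Valabrega–Valla.  Let `(Q,q,k)` be a regular local ring (its
maximal ideal is generated by a regular sequence), `I ⊆ q²` an ideal, and
`f₁,…,f_d ∈ I` a regular sequence whose initial forms (of degrees `deg i`, i.e.
`f i ∈ q^(deg i) \ q^(deg i + 1)`) form a regular sequence in the associated graded
ring `gr(Q)`; the latter is expressed componentwise: whenever `a ∈ q^n` and
`fᵢ·a` lies in the degree-`(n + deg i)` part of the initial ideal of `(f₁,…,f_{i-1})`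
modulo `q^(n+deg i+1)`, then `a` lies in the degree-`n` part of that initial ideal
modulo `q^(n+1)`.  Then `(f₁,…,f_d)* = (f₁*,…,f_d*)`, i.e. every element of
`(f₁,…,f_d) ∩ q^n` lies in `∑ⱼ fⱼ·q^(n - deg j) + q^(n+1)`; equivalently
`gr(Q/(f₁,…,f_d)) = gr(Q)/(f₁*,…,f_d*)`. -/
theorem stmt_17 {Q : Type*} [CommRing Q] [IsLocalRing Q] [IsNoetherianRing Q]
    (hreg : ∃ L : List Q, Ideal.span {a : Q | a ∈ L} = maximalIdeal Q ∧
      RingTheory.Sequence.IsRegular Q L)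
    (I : Ideal Q) (hI : I ≤ (maximalIdeal Q) ^ 2)
    (d : ℕ) (f : Fin d → Q) (hfI : ∀ i, f i ∈ I)
    (hfreg : RingTheory.Sequence.IsRegular Q (List.ofFn f))
    (deg : Fin d → ℕ)
    (hdeg : ∀ i, f i ∈ (maximalIdeal Q) ^ (deg i) ∧ f i ∉ (maximalIdeal Q) ^ (deg i + 1))
    (hinit : ∀ (i : Fin d) (n : ℕ), ∀ a ∈ (maximalIdeal Q) ^ n,
      f i * a ∈ (∑ j ∈ Finset.univ.filter (fun j => j < i),
            Ideal.span {f j} * (maximalIdeal Q) ^ (n + deg i - deg j)) ⊔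
          (maximalIdeal Q) ^ (n + deg i + 1) →
        a ∈ (∑ j ∈ Finset.univ.filter (fun j => j < i),
            Ideal.span {f j} * (maximalIdeal Q) ^ (n - deg j)) ⊔
          (maximalIdeal Q) ^ (n + 1)) :
    ∀ n : ℕ, ∀ a ∈ Ideal.span (Set.range f), a ∈ (maximalIdeal Q) ^ n →
      a ∈ (∑ j : Fin d, Ideal.span {f j} * (maximalIdeal Q) ^ (n - deg j)) ⊔
        (maximalIdeal Q) ^ (n + 1) :=
  stmt_17_general d f deg hdeg hinit
end
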